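/- arXiv:2310.04396 — 2 statements merged into one kernel-verified Lean document; each statement's English description precedes it below -/
import Mathlib

section
/- Let d ∈ {0, 1, …, m} and let I_d = {z ∈ ℝ^m : at most d coordinates of z are nonzero}. Then the family (K_q)_{q ∈ ((π/2)·{−1,0,1}^m) ∩ I_d} is a basis of the subspace span_ℝ{ K_p : p ∈ I_d } of H. -/
open scoped Real BigOperators
open MeasureTheory Filter

noncomputable section

/-- The frequency grid `{-1,0,1}^m`. -/
def Omega (m : ℕ) : Finset (Fin m → ℤ) :=
  Fintype.piFinset fun _ => ({-1, 0, 1} : Finset ℤ)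

/-- `ω ⬝ x = Σ_j ω_j x_j`. -/
def dotZ {m : ℕ} (ω : Fin m → ℤ) (x : Fin m → ℝ) : ℝ := ∑ j, (ω j : ℝ) * x j

/-- The kernel `K(x,z) = (2π)^{-m} Σ_{ω∈{-1,0,1}^m} e^{i ω·(x-z)}` (a real number). -/
def Kker (m : ℕ) (x z : Fin m → ℝ) : ℝ :=
  ((2 * Real.pi) ^ m)⁻¹ *
    (∑ ω ∈ Omega m, Complex.exp (Complex.I * (dotZ ω (x - z) : ℝ))).re

/-- `K_x = K(x, ·)`. -/
def Kfun (m : ℕ) (x : Fin m → ℝ) : (Fin m → ℝ) → ℝ := fun z => Kker m x z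

/-- The space `H` of real functions of the form `Σ_{ω∈{-1,0,1}^m} c_ω e^{i ω·z}`
with `c_{-ω} = conj (c_ω)`. -/
def Hset (m : ℕ) : Set ((Fin m → ℝ) → ℝ) :=
  { g | ∃ c : (Fin m → ℤ) → ℂ,
      (∀ ω, c (-ω) = starRingEnd ℂ (c ω)) ∧
      ∀ z, (g z : ℂ) = ∑ ω ∈ Omega m, c ω * Complex.exp (Complex.I * (dotZ ω z : ℝ)) }

/-- The cube `[-π,π]^m`. -/
def box (m : ℕ) : Set (Fin m → ℝ) := Set.univ.pi fun _ => Set.Icc (-Real.pi) Real.pi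

/-- Inner product `⟨g₁,g₂⟩_H = ∫_{[-π,π]^m} g₁ g₂`. -/
def innerH (m : ℕ) (g₁ g₂ : (Fin m → ℝ) → ℝ) : ℝ := ∫ z in box m, g₁ z * g₂ z

/-- Partial derivative in direction `j`. -/
def partialD {m : ℕ} (j : Fin m) (g : (Fin m → ℝ) → ℝ) : (Fin m → ℝ) → ℝ :=
  fun x => fderiv ℝ g x (Pi.single j 1)

/-- Iterated partial derivative `D^α`. -/
def Dmulti {m : ℕ} (α : Fin m → ℕ) (g : (Fin m → ℝ) → ℝ) : (Fin m → ℝ) → ℝ :=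
  (List.finRange m).foldr (fun j h => (partialD j)^[α j] h) g

/-- The index set `{-1,1}^{|α|}`, with entries indexed as `𝔦_{j,k}`, `j : Fin m`, `k : Fin (α j)`. -/
def ShiftSet {m : ℕ} (α : Fin m → ℕ) : Finset (∀ j : Fin m, Fin (α j) → ℤ) :=
  Fintype.piFinset fun j => Fintype.piFinset fun _ => ({-1, 1} : Finset ℤ)

/-- The product `𝔦^{(1,…,1)}` of all entries of `𝔦`. -/
def signProd {m : ℕ} (α : Fin m → ℕ) (ε : ∀ j : Fin m, Fin (α j) → ℤ) : ℝ :=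
  ∏ j, ∏ k, ((ε j k : ℤ) : ℝ)

/-- The shifted point `p_{α,𝔦}`, with `j`-th coordinate `(π/2)·((Σ_k 𝔦_{j,k}) mod 4)`,
the representative mod 4 taken in `{0,1,2,3}`. -/
def pshift {m : ℕ} (α : Fin m → ℕ) (ε : ∀ j : Fin m, Fin (α j) → ℤ) : Fin m → ℝ :=
  fun j => (Real.pi / 2) * (((∑ k, ε j k) % 4 : ℤ) : ℝ)

/-- The point of the grid `(π/2)·{-1,0,1}^m` coded by `s : Fin m → Fin 3`. -/
def pt3 (m : ℕ) (s : Fin m → Fin 3) : Fin m → ℝ :=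
  fun j => (Real.pi / 2) * (((s j : ℕ) : ℝ) - 1)

/-- The point of the grid `(π/2)·{0,1,2,3}^m` coded by `s : Fin m → Fin 4`. -/
def pt4 (m : ℕ) (s : Fin m → Fin 4) : Fin m → ℝ :=
  fun j => (Real.pi / 2) * ((s j : ℕ) : ℝ)

/-- The grid `(π/2)·{-1,0,1}^m ⊆ ℝ^m`. -/
def grid3 (m : ℕ) : Set (Fin m → ℝ) := Set.range (pt3 m)

/-- The grid `(π/2)·{0,1,2,3}^m ⊆ ℝ^m`. -/
def grid4 (m : ℕ) : Set (Fin m → ℝ) := Set.range (pt4 m)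

/-- `I_d`: points of `ℝ^m` with at most `d` nonzero coordinates. -/
def Iset (m d : ℕ) : Set (Fin m → ℝ) := { z | Set.ncard { j : Fin m | z j ≠ 0 } ≤ d }

/-- Multiindices `α ∈ (ℤ_{≥0})^m` with `|α| ≤ L`, as a finset. -/
def multiIdx (m L : ℕ) : Finset (Fin m → ℕ) :=
  (Fintype.piFinset fun _ : Fin m => Finset.range (L + 1)).filter fun α => ∑ j, α j ≤ L

/-- The sup norm `‖g‖_∞ = sup_z |g(z)|`. -/
def supNorm (m : ℕ) (g : (Fin m → ℝ) → ℝ) : ℝ := ⨆ z : Fin m → ℝ, |g z|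

/-- The norm `‖g‖_H = √⟨g,g⟩_H`. -/
def normH (m : ℕ) (g : (Fin m → ℝ) → ℝ) : ℝ := Real.sqrt (innerH m g g)

end

/-!
The kernel factorises as `K(x, z) = (2π)^{-m} ∏ⱼ (1 + 2 cos (xⱼ - zⱼ))`. In one variable every
translate `1 + 2 cos (t - ·)` is a combination of the three translates at the nodes
`-π/2, 0, π/2`, and at `t = 0` only the weight of the node `0` is nonzero. Tensoring, `K_p` is a
combination of the `K_q`, `q ∈ (π/2)·{-1,0,1}^m`, involving only those `q` whose nonzero
coordinates are nonzero coordinates of `p`; so `q ∈ I_d` whenever `p ∈ I_d`.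
The Gram matrix `(1 + 2 cos (a - b))` of the nodes has determinant 16, so its `m`-fold Kronecker
power, which is `(2π)^m` times the matrix `(K(q, q'))` over the grid, is invertible, and the
`K_q` are linearly independent.
-/

open Finset

namespace Matrix

variable {ι κ R : Type*} [Fintype ι] [CommRing R]

def piKronecker (A : Matrix κ κ R) : Matrix (ι → κ) (ι → κ) R :=
  of fun s t => ∏ j, A (s j) (t j)

theorem piKronecker_mul [DecidableEq ι] [Fintype κ] (A B : Matrix κ κ R) :
    piKronecker (ι := ι) A * piKronecker B = piKronecker (A * B) := by
  ext s u
  simp only [mul_apply, piKronecker, of_apply, ← prod_mul_distrib]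
  rw [prod_univ_sum, Fintype.piFinset_univ]

theorem piKronecker_one [DecidableEq κ] :
    piKronecker (ι := ι) (1 : Matrix κ κ R) = 1 := by
  ext s u
  by_cases h : s = u
  · subst h
    simp [piKronecker]
  · obtain ⟨j, hj⟩ := Function.ne_iff.1 h
    rw [one_apply_ne h, piKronecker, of_apply]
    exact prod_eq_zero (mem_univ j) (one_apply_ne hj)

theorem isUnit_piKronecker [DecidableEq ι] [Fintype κ] [DecidableEq κ] {A : Matrix κ κ R}
    (hA : IsUnit A) : IsUnit (piKronecker (ι := ι) A) := by
  refine (isUnit_iff_isUnit_det _).2 (isUnit_det_of_right_inverse (B := piKronecker A⁻¹) ?_)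
  rw [piKronecker_mul, mul_nonsing_inv A ((isUnit_iff_isUnit_det A).1 hA), piKronecker_one]

end Matrix

noncomputable def kernelFactor (t : ℝ) : ℝ := 1 + 2 * Real.cos t

open Complex in
theorem sum_exp_I_mul_three (y : ℝ) :
    ∑ a ∈ ({-1, 0, 1} : Finset ℤ), exp (I * (((a : ℝ) : ℂ) * y)) = kernelFactor y := by
  rw [sum_insert (by decide), sum_insert (by decide), sum_singleton]
  push_cast
  rw [show I * (-1 * y) = -y * I by ring, show I * (1 * y) = y * I by ring, exp_mul_I, exp_mul_I]
  simp [kernelFactor, cos_neg, sin_neg]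
  ring

theorem sum_Omega_exp_dotZ (m : ℕ) (y : Fin m → ℝ) :
    ∑ ω ∈ Omega m, Complex.exp (Complex.I * (dotZ ω y : ℝ)) = ((∏ j, kernelFactor (y j) : ℝ) : ℂ) := by
  simp only [dotZ, Complex.ofReal_sum, Complex.ofReal_mul, mul_sum, Complex.exp_sum, Omega]
  rw [← prod_univ_sum (fun _ ↦ {-1, 0, 1}) fun j (a : ℤ) ↦
    Complex.exp (Complex.I * (((a : ℝ) : ℂ) * y j)), Complex.ofReal_prod]
  exact prod_congr rfl fun j _ => sum_exp_I_mul_three (y j)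

theorem Kker_eq_prod (m : ℕ) (x z : Fin m → ℝ) :
    Kker m x z = ((2 * π) ^ m)⁻¹ * ∏ j, kernelFactor (x j - z j) := by
  rw [Kker, sum_Omega_exp_dotZ, Complex.ofReal_re]
  rfl

noncomputable def node (a : Fin 3) : ℝ := π / 2 * ((a : ℕ) - 1 : ℝ)

theorem pt3_apply (m : ℕ) (s : Fin m → Fin 3) (j : Fin m) : pt3 m s j = node (s j) := rfl

theorem node_injective : Function.Injective node := by
  intro a b h
  have := mul_left_cancel₀ (by positivity) h
  exact Fin.ext (Nat.cast_injective (sub_left_injective this))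

theorem node_eq_zero_iff {a : Fin 3} : node a = 0 ↔ a = 1 := by
  fin_cases a <;> norm_num [node, Real.pi_ne_zero]

noncomputable def nodeWeight : Fin 3 → ℝ → ℝ
  | 0, t => (1 - Real.cos t - Real.sin t) / 2
  | 1, t => Real.cos t
  | 2, t => (1 - Real.cos t + Real.sin t) / 2

theorem kernelFactor_sub_eq_sum_nodeWeight (t z : ℝ) :
    kernelFactor (t - z) = ∑ a, nodeWeight a t * kernelFactor (node a - z) := by
  simp only [Fin.sum_univ_three, nodeWeight, kernelFactor, node]
  norm_num
  rw [show -(π / 2) - z = -(z + π / 2) by ring, Real.cos_neg, Real.cos_add_pi_div_two,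
    Real.cos_pi_div_two_sub, Real.cos_sub]
  ring

theorem nodeWeight_zero {a : Fin 3} (ha : a ≠ 1) : nodeWeight a 0 = 0 := by
  fin_cases a <;> simp_all [nodeWeight]

def nodeGram : Matrix (Fin 3) (Fin 3) ℝ := !![3, 1, -1; 1, 3, 1; -1, 1, 3]

theorem kernelFactor_node_sub_node (a b : Fin 3) :
    kernelFactor (node a - node b) = nodeGram a b := by
  fin_cases a <;> fin_cases b <;> norm_num [kernelFactor, node, nodeGram, ← neg_add', add_halves]

theorem isUnit_nodeGram : IsUnit nodeGram := by
  rw [Matrix.isUnit_iff_isUnit_det, Matrix.det_fin_three]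
  simp [nodeGram]
  norm_num

theorem Kfun_eq_sum_pt3 (m : ℕ) (p : Fin m → ℝ) :
    Kfun m p = ∑ s : Fin m → Fin 3, (∏ j, nodeWeight (s j) (p j)) • Kfun m (pt3 m s) := by
  ext z
  simp only [Kfun, Kker_eq_prod, Finset.sum_apply, Pi.smul_apply, smul_eq_mul, pt3_apply]
  rw [prod_congr rfl fun j _ ↦ kernelFactor_sub_eq_sum_nodeWeight (p j) (z j), prod_univ_sum,
    Fintype.piFinset_univ, mul_sum]
  exact sum_congr rfl fun s _ ↦ by rw [prod_mul_distrib]; ring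

theorem Kker_pt3_pt3 (m : ℕ) :
    Matrix.of (fun s t ↦ Kker m (pt3 m s) (pt3 m t)) =
      ((2 * π) ^ m)⁻¹ • Matrix.piKronecker nodeGram := by
  ext s t
  simp [Kker_eq_prod, pt3_apply, kernelFactor_node_sub_node, Matrix.piKronecker]

theorem linearIndependent_Kfun_pt3 (m : ℕ) :
    LinearIndependent ℝ fun s ↦ Kfun m (pt3 m s) := by
  refine .of_comp (LinearMap.funLeft ℝ ℝ (pt3 m)) (Matrix.linearIndependent_rows_iff_isUnit.2 ?_)
  change IsUnit (Matrix.of fun s t ↦ Kker m (pt3 m s) (pt3 m t))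
  rw [Kker_pt3_pt3, ← Units.smul_mk0 (by positivity)]
  exact (Matrix.isUnit_piKronecker isUnit_nodeGram).smul _

theorem pt3_injective (m : ℕ) : Function.Injective (pt3 m) :=
  fun _ _ h ↦ funext fun j ↦ node_injective (congrFun h j)

theorem Kfun_mem_span_grid3 (m : ℕ) (p : Fin m → ℝ) :
    Kfun m p ∈ Submodule.span ℝ (Kfun m '' {q ∈ grid3 m | ∀ j, p j = 0 → q j = 0}) := by
  rw [Kfun_eq_sum_pt3]
  refine Submodule.sum_mem _ fun s _ ↦ ?_
  by_cases hw : ∏ j, nodeWeight (s j) (p j) = 0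
  · simp [hw]
  refine Submodule.smul_mem _ _ (Submodule.subset_span ⟨pt3 m s, ⟨⟨s, rfl⟩, fun j hj ↦ ?_⟩, rfl⟩)
  rw [pt3_apply, node_eq_zero_iff]
  by_contra hs
  exact hw (prod_eq_zero (mem_univ j) (by rw [hj]; exact nodeWeight_zero hs))

theorem mem_Iset_of_forall_eq_zero {m d : ℕ} {p q : Fin m → ℝ} (hp : p ∈ Iset m d)
    (hpq : ∀ j, p j = 0 → q j = 0) : q ∈ Iset m d :=
  (Set.ncard_le_ncard (fun j ↦ mt (hpq j)) (Set.toFinite _)).trans hp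

theorem Kgrid3_basis_of_span_Id_general (m : ℕ) (d : ℕ) :
    LinearIndependent ℝ (fun q : ↥(grid3 m ∩ Iset m d) => Kfun m (q : Fin m → ℝ)) ∧
      Submodule.span ℝ (Kfun m '' (grid3 m ∩ Iset m d)) =
        Submodule.span ℝ (Kfun m '' Iset m d) := by
  have hgrid : LinearIndepOn ℝ (Kfun m) (grid3 m) :=
    (linearIndepOn_range_iff (pt3_injective m) _).2 (linearIndependent_Kfun_pt3 m)
  refine ⟨hgrid.mono Set.inter_subset_left,
    le_antisymm (Submodule.span_mono (Set.image_mono Set.inter_subset_right)) ?_⟩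
  rw [Submodule.span_le]
  rintro _ ⟨p, hp, rfl⟩
  refine Submodule.span_mono (Set.image_mono ?_) (Kfun_mem_span_grid3 m p)
  exact fun q ⟨hq, hpq⟩ ↦ ⟨hq, mem_Iset_of_forall_eq_zero hp hpq⟩

/-- the family `(K_q)_{q ∈ ((π/2)·{-1,0,1}^m) ∩ I_d}` is a basis of
`span_ℝ{K_p : p ∈ I_d}`: it is linearly independent and has the same span. -/
theorem Kgrid3_basis_of_span_Id (m : ℕ) (hm : 0 < m) (d : ℕ) (hd : d ≤ m) :
    LinearIndependent ℝ (fun q : ↥(grid3 m ∩ Iset m d) => Kfun m (q : Fin m → ℝ)) ∧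
      Submodule.span ℝ (Kfun m '' (grid3 m ∩ Iset m d)) =
        Submodule.span ℝ (Kfun m '' Iset m d) :=
  Kgrid3_basis_of_span_Id_general m d
end

section
/- Let L ∈ {0, 1, …, m}, let g ∈ H, let V = span_ℝ{ K_q : q ∈ ((π/2)·{−1,0,1}^m) ∩ I_L }, and let P_V(g) be the orthogonal projection of g onto V with respect to ⟨·,·⟩_H. Then P_V(g) coincides with g on all of I_L, i.e. (P_V(g))(p) = g(p) for every p ∈ ℝ^m with at most L nonzero coordinates. In particular, if L = m then P_V(g) = g. -/
open scoped Real BigOperators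
open MeasureTheory Filter

/-!
`H` is a reproducing kernel space with kernel `K`, so `g - v`, which lies in `H` and is orthogonal
to every `K_q`, vanishes at each grid point `q ∈ (π/2)·{-1,0,1}^m ∩ I_L`. A function of `H` is a
trigonometric polynomial of degree at most one in each variable, hence is recovered from its values
on the grid by a tensor-product Lagrange formula. The one-dimensional cardinal functions of the
nodes `±π/2` vanish at `0`, so at a point `p ∈ I_L` only grid points whose support lies in that of
`p` contribute; these lie in `I_L`, so `g - v` vanishes at `p`.
-/

open Complex ComplexConjugate

noncomputable section

def expDot {m : ℕ} (ω : Fin m → ℤ) (z : Fin m → ℝ) : ℂ := exp (I * dotZ ω z)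

def trigPoly {m : ℕ} (c : (Fin m → ℤ) → ℂ) (z : Fin m → ℝ) : ℂ :=
  ∑ ω ∈ Omega m, c ω * expDot ω z

section expDot

variable {m : ℕ}

lemma dotZ_add_left (ω ω' : Fin m → ℤ) (z : Fin m → ℝ) :
    dotZ (ω + ω') z = dotZ ω z + dotZ ω' z := by
  simp [dotZ, add_mul, Finset.sum_add_distrib]

lemma dotZ_neg_left (ω : Fin m → ℤ) (z : Fin m → ℝ) : dotZ (-ω) z = -dotZ ω z := by
  simp [dotZ]

lemma dotZ_sub_right (ω : Fin m → ℤ) (x z : Fin m → ℝ) :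
    dotZ ω (x - z) = dotZ ω x - dotZ ω z := by
  simp [dotZ, mul_sub]

lemma expDot_add_left (ω ω' : Fin m → ℤ) (z : Fin m → ℝ) :
    expDot (ω + ω') z = expDot ω z * expDot ω' z := by
  rw [expDot, dotZ_add_left, ofReal_add, mul_add, exp_add, expDot, expDot]

lemma expDot_sub_right (ω : Fin m → ℤ) (x z : Fin m → ℝ) :
    expDot ω (x - z) = expDot ω x * expDot (-ω) z := by
  rw [expDot, dotZ_sub_right, expDot, expDot, dotZ_neg_left, ← exp_add]
  push_cast
  ring

lemma conj_expDot (ω : Fin m → ℤ) (z : Fin m → ℝ) :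
    conj (expDot ω z) = expDot (-ω) z := by
  rw [expDot, expDot, dotZ_neg_left, ← exp_conj, map_mul, conj_I, conj_ofReal]
  push_cast
  ring

lemma expDot_eq_prod (ω : Fin m → ℤ) (z : Fin m → ℝ) :
    expDot ω z = ∏ j, exp (I * ((ω j * z j : ℝ) : ℂ)) := by
  rw [expDot, dotZ, ofReal_sum, Finset.mul_sum, exp_sum]

lemma continuous_expDot (ω : Fin m → ℤ) : Continuous (expDot ω) := by
  unfold expDot dotZ
  fun_prop

lemma mem_Omega {ω : Fin m → ℤ} :
    ω ∈ Omega m ↔ ∀ j, ω j = -1 ∨ ω j = 0 ∨ ω j = 1 := by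
  simp [Omega, Fintype.mem_piFinset]

lemma neg_mem_Omega {ω : Fin m → ℤ} (hω : ω ∈ Omega m) : -ω ∈ Omega m := by
  rw [mem_Omega] at hω ⊢
  intro j
  have := hω j
  simp only [Pi.neg_apply]
  omega

lemma sum_Omega_neg {M : Type*} [AddCommMonoid M] (f : (Fin m → ℤ) → M) :
    ∑ ω ∈ Omega m, f (-ω) = ∑ ω ∈ Omega m, f ω :=
  Finset.sum_nbij' Neg.neg Neg.neg (fun _ => neg_mem_Omega) (fun _ => neg_mem_Omega) (by simp)
    (by simp) (fun _ _ => rfl)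

end expDot

section integral

variable {m : ℕ}

lemma integral_Icc_exp_int_mul (k : ℤ) :
    ∫ t in Set.Icc (-π) π, exp (I * ((k * t : ℝ) : ℂ)) =
      if k = 0 then ((2 * π : ℝ) : ℂ) else 0 := by
  rw [integral_Icc_eq_integral_Ioc, ← intervalIntegral.integral_of_le (by linarith [Real.pi_pos])]
  split_ifs with hk
  · subst hk
    simp [two_mul]
  · have hc : I * k ≠ 0 := mul_ne_zero I_ne_zero (Int.cast_ne_zero.mpr hk)
    have hperiod : exp (I * k * (π : ℝ)) = exp (I * k * (-π : ℝ)) :=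
      exp_eq_exp_iff_exists_int.mpr ⟨k, by push_cast; ring⟩
    simp_rw [show ∀ t : ℝ, I * ((k * t : ℝ) : ℂ) = I * k * t by intro t; push_cast; ring]
    rw [integral_exp_mul_complex hc, hperiod, sub_self, zero_div]

lemma integrableOn_box {f : (Fin m → ℝ) → ℂ} (hf : Continuous f) : IntegrableOn f (box m) :=
  hf.continuousOn.integrableOn_compact (isCompact_univ_pi fun _ => isCompact_Icc)

lemma integral_box_expDot (k : Fin m → ℤ) :
    ∫ z in box m, expDot k z = if k = 0 then ((2 * π : ℝ) ^ m : ℂ) else 0 := by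
  rw [box, volume_pi, Measure.restrict_pi_pi]
  simp_rw [expDot_eq_prod]
  rw [integral_fintype_prod_eq_prod (fun j t => exp (I * ((k j * t : ℝ) : ℂ)))]
  simp_rw [integral_Icc_exp_int_mul, Fintype.prod_ite_zero, funext_iff, Pi.zero_apply]
  simp

lemma integral_box_trigPoly_mul_expDot (c : (Fin m → ℤ) → ℂ) {ω : Fin m → ℤ}
    (hω : ω ∈ Omega m) :
    ∫ z in box m, trigPoly c z * expDot (-ω) z = (2 * π : ℝ) ^ m * c ω := by
  simp_rw [trigPoly, Finset.sum_mul, mul_assoc, ← expDot_add_left]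
  rw [integral_finsetSum _ fun ω' _ =>
    integrableOn_box (f := fun z => c ω' * expDot (ω' + -ω) z) ((continuous_expDot _).const_mul _)]
  simp_rw [integral_const_mul, integral_box_expDot, ← sub_eq_add_neg, sub_eq_zero]
  simp [hω, mul_comm]

end integral

def Hsubmodule (m : ℕ) : Submodule ℝ ((Fin m → ℝ) → ℝ) where
  carrier := Hset m
  add_mem' := by
    rintro g₁ g₂ ⟨c₁, hc₁, h₁⟩ ⟨c₂, hc₂, h₂⟩
    refine ⟨c₁ + c₂, fun ω => by simp [hc₁, hc₂], fun z => ?_⟩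
    simp [h₁, h₂, add_mul, Finset.sum_add_distrib]
  zero_mem' := ⟨0, by simp, by simp⟩
  smul_mem' := by
    rintro r g ⟨c, hc, h⟩
    refine ⟨fun ω => r * c ω, fun ω => by simp [hc], fun z => ?_⟩
    simp [h, Finset.mul_sum, mul_assoc]

section kernel

variable {m : ℕ}

lemma ofReal_Kker (x z : Fin m → ℝ) :
    (Kker m x z : ℂ) = (((2 * π) ^ m)⁻¹ : ℝ) * ∑ ω ∈ Omega m, expDot ω (x - z) := by
  have hreal :
      conj (∑ ω ∈ Omega m, expDot ω (x - z)) = ∑ ω ∈ Omega m, expDot ω (x - z) := by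
    simp_rw [map_sum, conj_expDot]
    exact sum_Omega_neg fun ω => expDot ω (x - z)
  rw [Kker, ofReal_mul]
  exact congrArg _ (conj_eq_iff_re.mp hreal)

lemma Kfun_mem_Hset (x : Fin m → ℝ) : Kfun m x ∈ Hset m := by
  refine ⟨fun ω => (((2 * π) ^ m)⁻¹ : ℝ) * expDot (-ω) x, fun ω => ?_, fun z => ?_⟩
  · simp only [map_mul, conj_ofReal, conj_expDot, neg_neg]
  · change (Kker m x z : ℂ) = trigPoly _ z
    rw [ofReal_Kker, Finset.mul_sum, trigPoly, ← sum_Omega_neg]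
    simp_rw [expDot_sub_right, neg_neg, mul_assoc]

lemma innerH_Kfun {h : (Fin m → ℝ) → ℝ} (hh : h ∈ Hset m) (x : Fin m → ℝ) :
    innerH m h (Kfun m x) = h x := by
  obtain ⟨c, -, hc⟩ := hh
  replace hc : ∀ z, (h z : ℂ) = trigPoly c z := hc
  have hK : ∀ z, ((h z * Kfun m x z : ℝ) : ℂ) = ∑ ω ∈ Omega m,
      (((2 * π) ^ m)⁻¹ : ℝ) * expDot ω x * (trigPoly c z * expDot (-ω) z) := fun z => by
    rw [ofReal_mul, hc z, Kfun, ofReal_Kker, Finset.mul_sum, Finset.mul_sum]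
    refine Finset.sum_congr rfl fun ω _ => ?_
    rw [expDot_sub_right]
    ring
  apply ofReal_injective
  rw [innerH, ← integral_complex_ofReal]
  simp_rw [hK]
  rw [integral_finsetSum _ fun ω _ => integrableOn_box
    (f := fun z => (((2 * π) ^ m)⁻¹ : ℝ) * expDot ω x * (trigPoly c z * expDot (-ω) z))
    (continuous_const.mul ((continuous_finsetSum _ fun ω' _ =>
      (continuous_expDot ω').const_mul (c ω')).mul (continuous_expDot _)))]
  simp_rw [integral_const_mul]
  rw [hc x, trigPoly]
  refine Finset.sum_congr rfl fun ω hω => ?_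
  rw [integral_box_trigPoly_mul_expDot c hω]
  have : ((2 * π : ℝ) : ℂ) ^ m ≠ 0 := pow_ne_zero _ (ofReal_ne_zero.mpr (by positivity))
  push_cast
  field_simp

end kernel

section interpolation

/-- The Lagrange basis of `span {1, cos, sin}` for the nodes `(π/2)·t`, `t ∈ {-1, 0, 1}`:
`cardinal t (π/2 * t') = if t = t' then 1 else 0`. -/
def cardinal (t : ℤ) (s : ℝ) : ℝ :=
  t ^ 2 * ((1 - Real.cos s) / 2) + (1 - t ^ 2) * Real.cos s + t * Real.sin s / 2

lemma exp_I_mul_ofReal (r : ℝ) : exp (I * r) = Real.cos r + Real.sin r * I := by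
  rw [mul_comm, exp_mul_I, ← ofReal_cos, ← ofReal_sin]

lemma exp_int_mul_eq_sum_cardinal {a : ℤ} (ha : a = -1 ∨ a = 0 ∨ a = 1) (s : ℝ) :
    exp (I * ((a * s : ℝ) : ℂ)) = ∑ t ∈ ({-1, 0, 1} : Finset ℤ),
      exp (I * ((a * (π / 2 * t) : ℝ) : ℂ)) * cardinal t s := by
  simp only [exp_I_mul_ofReal, Finset.sum_insert (by decide : (-1 : ℤ) ∉ ({0, 1} : Finset ℤ)),
    Finset.sum_pair (by decide : (0 : ℤ) ≠ 1)]
  rcases ha with rfl | rfl | rfl <;> simp [cardinal] <;> ring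

lemma cardinal_zero_of_ne_zero {t : ℤ} (ht : t = -1 ∨ t = 0 ∨ t = 1) (h0 : t ≠ 0) :
    cardinal t 0 = 0 := by
  rcases ht with rfl | rfl | rfl <;> simp_all [cardinal]

variable {m : ℕ}

def gridPoint (τ : Fin m → ℤ) : Fin m → ℝ := fun j => π / 2 * τ j

lemma gridPoint_mem_grid3 {τ : Fin m → ℤ} (hτ : τ ∈ Omega m) : gridPoint τ ∈ grid3 m := by
  refine ⟨fun j => ⟨(τ j + 1).toNat, by have := mem_Omega.mp hτ j; omega⟩,
    funext fun j => ?_⟩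
  rcases mem_Omega.mp hτ j with h | h | h <;>
    norm_num [pt3, gridPoint, h, show (2 : ℤ).toNat = 2 from rfl]

lemma expDot_eq_sum_cardinal {ω : Fin m → ℤ} (hω : ω ∈ Omega m) (z : Fin m → ℝ) :
    expDot ω z =
      ∑ τ ∈ Omega m, expDot ω (gridPoint τ) * ∏ j, (cardinal (τ j) (z j) : ℂ) := by
  simp_rw [expDot_eq_prod, ← Finset.prod_mul_distrib]
  rw [Finset.prod_congr rfl fun j _ => exp_int_mul_eq_sum_cardinal (mem_Omega.mp hω j) (z j),
    Finset.prod_univ_sum]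
  rfl

lemma trigPoly_eq_sum_cardinal (c : (Fin m → ℤ) → ℂ) (z : Fin m → ℝ) :
    trigPoly c z =
      ∑ τ ∈ Omega m, trigPoly c (gridPoint τ) * ∏ j, (cardinal (τ j) (z j) : ℂ) := by
  simp_rw [trigPoly, Finset.sum_mul, mul_assoc]
  rw [Finset.sum_comm]
  refine Finset.sum_congr rfl fun ω hω => ?_
  rw [← Finset.mul_sum, ← expDot_eq_sum_cardinal hω]

lemma mem_Iset_of_support_subset {d : ℕ} {p q : Fin m → ℝ} (hp : p ∈ Iset m d)
    (hqp : ∀ j, q j ≠ 0 → p j ≠ 0) : q ∈ Iset m d :=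
  (Set.ncard_le_ncard hqp (Set.toFinite _)).trans hp

lemma Iset_self (m : ℕ) : Iset m m = Set.univ :=
  Set.eq_univ_of_forall fun _ =>
    (Set.ncard_le_ncard (Set.subset_univ _)).trans (by simp [Set.ncard_univ])

lemma eq_zero_on_Iset_of_eq_zero_on_grid {L : ℕ} {h : (Fin m → ℝ) → ℝ} (hh : h ∈ Hset m)
    (hgrid : ∀ q ∈ grid3 m ∩ Iset m L, h q = 0) {p : Fin m → ℝ} (hp : p ∈ Iset m L) :
    h p = 0 := by
  obtain ⟨c, -, hc⟩ := hh
  replace hc : ∀ z, (h z : ℂ) = trigPoly c z := hc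
  rw [← ofReal_eq_zero, hc, trigPoly_eq_sum_cardinal]
  refine Finset.sum_eq_zero fun τ hτ => ?_
  by_cases hzero : ∃ j, τ j ≠ 0 ∧ p j = 0
  · obtain ⟨j, hτj, hpj⟩ := hzero
    refine mul_eq_zero_of_right _ (Finset.prod_eq_zero (Finset.mem_univ j) ?_)
    rw [hpj, cardinal_zero_of_ne_zero (mem_Omega.mp hτ j) hτj, ofReal_zero]
  · have hq : gridPoint τ ∈ Iset m L := mem_Iset_of_support_subset hp fun j hj hpj =>
      hzero ⟨j, fun hτj => hj (by simp [gridPoint, hτj]), hpj⟩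
    rw [← hc, hgrid _ ⟨gridPoint_mem_grid3 hτ, hq⟩, ofReal_zero, zero_mul]

end interpolation

theorem projection_coincides_on_IL_general (m : ℕ) (L : ℕ)
    (g : (Fin m → ℝ) → ℝ) (hg : g ∈ Hset m)
    (v : (Fin m → ℝ) → ℝ)
    (hvV : v ∈ Submodule.span ℝ (Kfun m '' (grid3 m ∩ Iset m L)))
    (horth : ∀ w ∈ Submodule.span ℝ (Kfun m '' (grid3 m ∩ Iset m L)),
      innerH m (g - v) w = 0) :
    (∀ p ∈ Iset m L, v p = g p) ∧ (L = m → v = g) := by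
  have hv : v ∈ Hsubmodule m :=
    Submodule.span_le.mpr (by rintro _ ⟨q, -, rfl⟩; exact Kfun_mem_Hset q) hvV
  have hgv : g - v ∈ Hset m := sub_mem (show g ∈ Hsubmodule m from hg) hv
  have hgrid : ∀ q ∈ grid3 m ∩ Iset m L, (g - v) q = 0 := fun q hq => by
    rw [← innerH_Kfun hgv q]
    exact horth _ (Submodule.subset_span ⟨q, hq, rfl⟩)
  have hIL : ∀ p ∈ Iset m L, v p = g p := fun p hp =>
    (sub_eq_zero.mp (eq_zero_on_Iset_of_eq_zero_on_grid hgv hgrid hp)).symm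
  refine ⟨hIL, ?_⟩
  rintro rfl
  exact funext fun p => hIL p (Iset_self _ ▸ Set.mem_univ p)

/-- the orthogonal projection of `g ∈ H` onto
`V = span{K_q : q ∈ ((π/2)·{-1,0,1}^m) ∩ I_L}` coincides with `g` on all of `I_L`;
in particular, if `L = m` then it equals `g`. -/
theorem projection_coincides_on_IL (m : ℕ) (hm : 0 < m) (L : ℕ) (hL : L ≤ m)
    (g : (Fin m → ℝ) → ℝ) (hg : g ∈ Hset m)
    (v : (Fin m → ℝ) → ℝ)
    (hvV : v ∈ Submodule.span ℝ (Kfun m '' (grid3 m ∩ Iset m L)))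
    (horth : ∀ w ∈ Submodule.span ℝ (Kfun m '' (grid3 m ∩ Iset m L)),
      innerH m (g - v) w = 0) :
    (∀ p ∈ Iset m L, v p = g p) ∧ (L = m → v = g) :=
  projection_coincides_on_IL_general m L g hg v hvV horth
end
end
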